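/- The group presented by ⟨a₁, a₂, a₃ | ρ² = a₃, {a₂,a₃}₃ = 1, {a₁, a₂a₃a₂^{-1}}₃ = 1, (a₁a₂a₁)a₂(a₁a₂a₁)^{-1} = a₃a₁a₃^{-1}, (a₁a₂)a₁(a₁a₂)^{-1} = a₃a₂a₃^{-1}⟩, where ρ = a₁a₂a₃ and {x,y}₃ = 1 means xyx = yxy, admits a surjective homomorphism onto the (2,3,7) triangle group ⟨x, y | x² = y³ = (xy)⁷ = 1⟩; in particular this group is infinite. -/
import Mathlib

/-- The bracket `{a,b}_m`. -/
def degtBracket {G : Type*} [Group G] (m : ℕ) (a b : G) : G :=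
  if m % 2 = 0 then (a * b) ^ (m / 2) * ((b * a) ^ (m / 2))⁻¹
  else ((a * b) ^ (m / 2) * a) * ((b * a) ^ (m / 2) * b)⁻¹

namespace QuinticA6

def a1 : FreeGroup (Fin 3) := FreeGroup.of 0
def a2 : FreeGroup (Fin 3) := FreeGroup.of 1
def a3 : FreeGroup (Fin 3) := FreeGroup.of 2
def rho : FreeGroup (Fin 3) := a1 * a2 * a3

/-- Relators for the group of the quintic with singularities `A₆ ⊕ 3A₂`. -/
def rels : Set (FreeGroup (Fin 3)) :=
  {rho ^ 2 * a3⁻¹,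
   degtBracket 3 a2 a3,
   degtBracket 3 a1 (a2 * a3 * a2⁻¹),
   ((a1 * a2 * a1) * a2 * (a1 * a2 * a1)⁻¹) * (a3 * a1 * a3⁻¹)⁻¹,
   ((a1 * a2) * a1 * (a1 * a2)⁻¹) * (a3 * a2 * a3⁻¹)⁻¹}

abbrev G := PresentedGroup rels

/-- The `(2,3,7)` triangle group `⟨x, y | x² = y³ = (xy)⁷ = 1⟩`. -/
def triangleRels : Set (FreeGroup (Fin 2)) :=
  {FreeGroup.of 0 ^ 2, FreeGroup.of 1 ^ 3,
   (FreeGroup.of (0 : Fin 2) * FreeGroup.of 1) ^ 7}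

abbrev Triangle237 := PresentedGroup triangleRels

/-! ### Part A: the epimorphism `G → Triangle237` -/

def xT : Triangle237 := PresentedGroup.of 0
def yT : Triangle237 := PresentedGroup.of 1

lemma rel_eq_one {r : FreeGroup (Fin 2)} (hr : r ∈ triangleRels) :
    PresentedGroup.mk triangleRels r = 1 :=
  (QuotientGroup.eq_one_iff _).mpr (Subgroup.subset_normalClosure hr)

lemma hx2 : xT * xT = 1 := by
  have := rel_eq_one (r := FreeGroup.of 0 ^ 2) (by simp [triangleRels])
  simpa [xT, PresentedGroup.of, map_pow, sq] using this

lemma hy3 : yT * (yT * yT) = 1 := by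
  have := rel_eq_one (r := FreeGroup.of 1 ^ 3) (by simp [triangleRels])
  simpa [yT, PresentedGroup.of, map_pow, pow_succ, mul_assoc] using this

lemma h7 : (xT * yT) ^ 7 = 1 := by
  have := rel_eq_one (r := (FreeGroup.of (0:Fin 2) * FreeGroup.of 1) ^ 7)
    (by simp [triangleRels])
  simpa [xT, yT, PresentedGroup.of, map_pow, map_mul] using this

lemma hxinv : xT⁻¹ = xT := inv_eq_of_mul_eq_one_right hx2
lemma hyinv : yT⁻¹ = yT * yT := inv_eq_of_mul_eq_one_right hy3
lemma cx (t : Triangle237) : xT * (xT * t) = t := by rw [← mul_assoc, hx2, one_mul]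
lemma cy (t : Triangle237) : yT * (yT * (yT * t)) = t := by
  rw [← mul_assoc, ← mul_assoc, mul_assoc yT yT yT, hy3, one_mul]

lemma p7 : (xT*yT)*((xT*yT)*((xT*yT)*((xT*yT)*((xT*yT)*((xT*yT)*(xT*yT)))))) = 1 := by
  have h := h7
  rw [pow_succ, pow_succ, pow_succ, pow_succ, pow_succ, pow_succ, pow_one] at h
  simpa only [mul_assoc] using h

lemma hA : ((xT * yT) * (xT * yT) * (xT * yT))⁻¹
    = (xT * yT) * (xT * yT) * (xT * yT) * (xT * yT) := by
  refine inv_eq_of_mul_eq_one_right ?_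
  simpa only [mul_assoc] using p7

lemma hB : (xT * yT) * (xT * yT) * (xT * yT) * (xT * yT) * (xT * yT) * (xT * yT)
    = (xT * yT)⁻¹ := by
  refine eq_inv_of_mul_eq_one_left ?_
  simpa only [mul_assoc] using p7

lemma hC : ((xT * yT) * (xT * yT) * (xT * yT) * (xT * yT) * (xT * yT) * (xT * yT))⁻¹
    = xT * yT := by rw [hB, inv_inv]

def t1v : Triangle237 := xT * yT⁻¹
def t2v : Triangle237 := (xT * yT⁻¹)⁻¹ * ((xT * yT) * (xT * yT) * (xT * yT))⁻¹
def t3v : Triangle237 := (xT * yT) * (xT * yT) * (xT * yT) * (xT * yT) * (xT * yT) * (xT * yT)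

def fmap : Fin 3 → Triangle237
  | 0 => t1v
  | 1 => t2v
  | 2 => t3v

lemma fmap0 : fmap 0 = t1v := rfl
lemma fmap1 : fmap 1 = t2v := rfl
lemma fmap2 : fmap 2 = t3v := rfl

lemma relcheck : ∀ r ∈ rels, FreeGroup.lift fmap r = 1 := by
  intro r hr
  simp only [rels, Set.mem_insert_iff, Set.mem_singleton_iff] at hr
  rcases hr with rfl | rfl | rfl | rfl | rfl
  · simp only [rho, a1, a2, a3, map_mul, map_pow, map_inv, FreeGroup.lift_apply_of,
      fmap0, fmap1, fmap2, t1v, t2v, t3v, pow_two]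
    group
  · simp only [degtBracket, rho, a1, a2, a3, map_mul, map_pow, map_inv, FreeGroup.lift_apply_of,
      fmap0, fmap1, fmap2, t1v, t2v, t3v]
    norm_num
    simp only [fmap1, fmap2, t2v, t3v]
    rw [hA, hB]
    simp only [mul_inv_rev, inv_inv, mul_assoc, hxinv, hyinv, cx, cy, hx2, hy3,
      one_mul, mul_one]
  · simp only [degtBracket, rho, a1, a2, a3, map_mul, map_pow, map_inv, FreeGroup.lift_apply_of]
    norm_num
    simp only [fmap0, fmap1, fmap2, t1v, t2v, t3v]
    rw [hB]
    simp only [mul_inv_rev, inv_inv, mul_assoc, hxinv, hyinv, cx, cy, hx2, hy3,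
      one_mul, mul_one]
  · simp only [rho, a1, a2, a3, map_mul, map_inv, FreeGroup.lift_apply_of,
      fmap0, fmap1, fmap2, t1v, t2v, t3v]
    rw [hA]
    simp only [mul_inv_rev, inv_inv, mul_assoc, hxinv, hyinv, cx, cy, hx2, hy3,
      one_mul, mul_one]
  · simp only [rho, a1, a2, a3, map_mul, map_inv, FreeGroup.lift_apply_of,
      fmap0, fmap1, fmap2, t1v, t2v, t3v]
    rw [hA]
    simp only [mul_inv_rev, inv_inv, mul_assoc, hxinv, hyinv, cx, cy, hx2, hy3,
      one_mul, mul_one]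

def phi : G →* Triangle237 := PresentedGroup.toGroup relcheck

lemma phi_of (i : Fin 3) : phi (PresentedGroup.of i) = fmap i :=
  PresentedGroup.toGroup.of relcheck

lemma yT_mem : yT ∈ phi.range := by
  refine ⟨((PresentedGroup.of 0)⁻¹ * (PresentedGroup.of 2)⁻¹) *
    ((PresentedGroup.of 0)⁻¹ * (PresentedGroup.of 2)⁻¹), ?_⟩
  rw [map_mul, map_mul, map_inv, map_inv, phi_of, phi_of, fmap0, fmap2, t1v, t3v, hC]
  simp only [mul_inv_rev, inv_inv, mul_assoc, hxinv, hyinv, cx, cy, hx2, hy3,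
    one_mul, mul_one]

lemma xT_mem : xT ∈ phi.range := by
  have h3 : t3v ∈ phi.range := ⟨PresentedGroup.of 2, by rw [phi_of, fmap2]⟩
  have hy := yT_mem
  have : xT = t3v⁻¹ * yT⁻¹ := by
    rw [t3v, hC, hyinv]
    simp only [mul_assoc]
    rw [hy3, mul_one]
  rw [this]
  exact mul_mem (inv_mem h3) (inv_mem hy)

lemma phi_surj : Function.Surjective phi := by
  intro g
  have : g ∈ phi.range := by
    refine PresentedGroup.generated_by triangleRels phi.range ?_ g
    intro j
    fin_cases j
    · exact xT_mem
    · exact yT_mem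
  exact this


/-! ### Part B: `Triangle237` is infinite -/

abbrev M2 := Matrix (Fin 2) (Fin 2) ℝ

section Mats
variable (l s : ℝ)

noncomputable def Xm : M2 := !![0,-1;1,0]
noncomputable def Ym : M2 := !![1/2, (s+l)/2; (s-l)/2, 1/2]
noncomputable def Yi : M2 := !![1/2, -(s+l)/2; -(s-l)/2, 1/2]
noncomputable def Nm : M2 := !![(l-s)/2, -(1/2); 1/2, (s+l)/2]
noncomputable def Pm : M2 := !![((s-l)/2)^2 + 1/4, -s/2; -s/2, ((s+l)/2)^2 + 1/4]

end Mats

variable {l s : ℝ}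

lemma hXX : Xm * Xm = (-1 : M2) := by
  ext i j; fin_cases i <;> fin_cases j <;>
    simp [Xm, Matrix.mul_apply, Fin.sum_univ_two, Matrix.one_apply]

lemma hXi : Xm * !![0,1;-1,0] = (1 : M2) := by
  ext i j; fin_cases i <;> fin_cases j <;>
    simp [Xm, Matrix.mul_apply, Fin.sum_univ_two, Matrix.one_apply]

lemma hXi' : !![0,1;-1,0] * Xm = (1 : M2) := by
  ext i j; fin_cases i <;> fin_cases j <;>
    simp [Xm, Matrix.mul_apply, Fin.sum_univ_two, Matrix.one_apply]

lemma hYYi (hs : s^2 = l^2 - 3) : Ym l s * Yi l s = (1 : M2) := by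
  ext i j; fin_cases i <;> fin_cases j <;>
    simp [Ym, Yi, Matrix.mul_apply, Fin.sum_univ_two, Matrix.one_apply] <;>
    linarith [hs]

lemma hYiY (hs : s^2 = l^2 - 3) : Yi l s * Ym l s = (1 : M2) := by
  ext i j; fin_cases i <;> fin_cases j <;>
    simp [Ym, Yi, Matrix.mul_apply, Fin.sum_univ_two, Matrix.one_apply] <;>
    linarith [hs]

lemma hYcube (hs : s^2 = l^2 - 3) : Ym l s * Ym l s * Ym l s = (-1 : M2) := by
  ext i j; fin_cases i <;> fin_cases j <;>
    simp [Ym, Matrix.mul_apply, Fin.sum_univ_two, Matrix.one_apply] <;>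
    first
      | linear_combination (3/8 : ℝ) * hs
      | linear_combination ((s+l)/8) * hs
      | linear_combination ((s-l)/8) * hs

lemma hXY : Xm * Ym l s = Nm l s := by
  ext i j; fin_cases i <;> fin_cases j <;>
    simp [Xm, Ym, Nm, Matrix.mul_apply, Fin.sum_univ_two] <;> ring

lemma hN2 (hs : s^2 = l^2 - 3) : Nm l s * Nm l s = l • Nm l s - 1 := by
  ext i j; fin_cases i <;> fin_cases j <;>
    simp [Nm, Matrix.mul_apply, Fin.sum_univ_two, Matrix.one_apply] <;>
    first
      | linear_combination hs/4
      | ring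

lemma hN7 (hs : s^2 = l^2 - 3) (hcub : l^3 = l^2 + 2*l - 1) :
    (Nm l s) ^ 7 = (-1 : M2) := by
  set N := Nm l s with hN
  have h2 : N ^ 2 = l • N - 1 := by rw [pow_two]; exact hN2 hs
  have h3 : N ^ 3 = (l^2 - 1) • N - l • 1 := by
    rw [pow_succ, h2, sub_mul, smul_mul_assoc, one_mul, ← pow_two, h2]; module
  have h4 : N ^ 4 = (l^3 - 2*l) • N - (l^2 - 1) • 1 := by
    rw [pow_succ, h3, sub_mul, smul_mul_assoc, smul_mul_assoc, one_mul, ← pow_two, h2]; module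
  have h5 : N ^ 5 = (l^4 - 3*l^2 + 1) • N - (l^3 - 2*l) • 1 := by
    rw [pow_succ, h4, sub_mul, smul_mul_assoc, smul_mul_assoc, one_mul, ← pow_two, h2]; module
  have h6 : N ^ 6 = (l^5 - 4*l^3 + 3*l) • N - (l^4 - 3*l^2 + 1) • 1 := by
    rw [pow_succ, h5, sub_mul, smul_mul_assoc, smul_mul_assoc, one_mul, ← pow_two, h2]; module
  have h7 : N ^ 7 = (l^6 - 5*l^4 + 6*l^2 - 1) • N - (l^5 - 4*l^3 + 3*l) • 1 := by
    rw [pow_succ, h6, sub_mul, smul_mul_assoc, smul_mul_assoc, one_mul, ← pow_two, h2]; module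
  rw [h7, show l^6 - 5*l^4 + 6*l^2 - 1 = (0:ℝ) by linear_combination (l^3 + l^2 - 2*l - 1) * hcub,
    show l^5 - 4*l^3 + 3*l = (1:ℝ) by linear_combination (l^2 + l - 1) * hcub]
  module

lemma hW (hs : s^2 = l^2 - 3) : Xm * Ym l s * Xm * Yi l s = -(Pm l s) := by
  ext i j; fin_cases i <;> fin_cases j <;>
    simp [Xm, Ym, Yi, Pm, Matrix.mul_apply, Fin.sum_univ_two] <;> ring

lemma hP2 (hs : s^2 = l^2 - 3) : Pm l s * Pm l s = (l^2 - 1) • Pm l s - 1 := by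
  ext i j; fin_cases i <;> fin_cases j <;>
    simp [Pm, Matrix.mul_apply, Fin.sum_univ_two, Matrix.one_apply] <;>
    first
      | linear_combination (7/16 + s^2/16 - l*s/4 + 3*l^2/16) * hs
      | linear_combination (-(s/4)) * hs
      | linear_combination (7/16 + s^2/16 + l*s/4 + 3*l^2/16) * hs

instance znormal : (Subgroup.zpowers (-1 : M2ˣ)).Normal := by
  constructor
  intro n hn g
  obtain ⟨k, rfl⟩ := Subgroup.mem_zpowers_iff.mp hn
  have hc : Commute g ((-1 : M2ˣ) ^ k) := (Commute.neg_one_right g).zpow_right k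
  rw [hc.eq, mul_inv_cancel_right]
  exact Subgroup.mem_zpowers_iff.mpr ⟨k, rfl⟩

lemma triangle_infinite (l s : ℝ) (hl1 : 1.8 ≤ l) (hl2 : l ≤ 1.81)
    (hcub : l^3 = l^2 + 2*l - 1) (hs : s^2 = l^2 - 3) (hs0 : 0 ≤ s) :
    Infinite Triangle237 := by
  have hspos : 0 < s := by
    rcases eq_or_lt_of_le hs0 with h | h
    · exfalso; nlinarith
    · exact h
  -- the units
  let uX : M2ˣ := ⟨Xm, !![0,1;-1,0], hXi, hXi'⟩
  let uY : M2ˣ := ⟨Ym l s, Yi l s, hYYi hs, hYiY hs⟩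
  have huX2 : uX * uX = -1 := Units.ext (by
    rw [Units.val_mul, Units.val_neg, Units.val_one]; exact hXX)
  have huY3 : uY * uY * uY = -1 := Units.ext (by
    rw [Units.val_mul, Units.val_mul, Units.val_neg, Units.val_one]; exact hYcube hs)
  have huN7 : (uX * uY) ^ 7 = -1 := Units.ext (by
    rw [Units.val_pow_eq_pow_val, Units.val_mul, Units.val_neg, Units.val_one,
      show (uX : M2) * uY = Nm l s from hXY]
    exact hN7 hs hcub)
  -- the quotient of the units by ±1
  let Z : Subgroup M2ˣ := Subgroup.zpowers (-1 : M2ˣ)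
  let mkQ : M2ˣ →* (M2ˣ ⧸ Z) := QuotientGroup.mk' Z
  have mk_neg_one : mkQ (-1) = 1 :=
    (QuotientGroup.eq_one_iff _).mpr (Subgroup.mem_zpowers _)
  -- the homomorphism from the triangle group
  let fq : Fin 2 → (M2ˣ ⧸ Z) := fun i => match i with
    | 0 => mkQ uX
    | 1 => mkQ uY
  have relcheckq : ∀ r ∈ triangleRels, FreeGroup.lift fq r = 1 := by
    intro r hr
    simp only [triangleRels, Set.mem_insert_iff, Set.mem_singleton_iff] at hr
    rcases hr with rfl | rfl | rfl
    · rw [map_pow, FreeGroup.lift_apply_of]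
      show (mkQ uX) ^ 2 = 1
      rw [pow_two, ← map_mul, huX2, mk_neg_one]
    · rw [map_pow, FreeGroup.lift_apply_of]
      show (mkQ uY) ^ 3 = 1
      rw [pow_succ, pow_two, ← map_mul, ← map_mul, huY3, mk_neg_one]
    · rw [map_pow, map_mul, FreeGroup.lift_apply_of, FreeGroup.lift_apply_of]
      show ((mkQ uX) * (mkQ uY)) ^ 7 = 1
      rw [← map_mul, ← map_pow, huN7, mk_neg_one]
  let θ : Triangle237 →* (M2ˣ ⧸ Z) := PresentedGroup.toGroup relcheckq
  -- the hyperbolic element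
  let g : Triangle237 := xT * yT * xT * yT⁻¹
  let uW : M2ˣ := uX * uY * uX * uY⁻¹
  have hθg : θ g = mkQ uW := by
    show θ (xT * yT * xT * yT⁻¹) = mkQ uW
    have hθx : θ xT = mkQ uX := PresentedGroup.toGroup.of relcheckq
    have hθy : θ yT = mkQ uY := PresentedGroup.toGroup.of relcheckq
    rw [map_mul, map_mul, map_mul, map_inv, hθx, hθy]
    rw [← map_inv, ← map_mul, ← map_mul, ← map_mul]
  -- powers of P
  have hPn : ∀ n : ℕ, ∃ u v : ℝ, 0 ≤ u ∧ u ≤ v ∧ 1 ≤ v ∧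
      (Pm l s) ^ (n+1) = v • Pm l s - u • 1 := by
    intro n
    induction n with
    | zero => exact ⟨0, 1, le_rfl, zero_le_one, le_rfl, by simp⟩
    | succ m ih =>
      obtain ⟨u, v, hu, huv, hv, hP⟩ := ih
      refine ⟨v, (l^2-1)*v - u, le_trans hu huv, ?_, ?_, ?_⟩
      · nlinarith [hl1]
      · nlinarith [hl1]
      · rw [pow_succ, hP, sub_mul, smul_mul_assoc, smul_mul_assoc, one_mul, hP2 hs]
        module
  -- P^n is never ±1 for n ≥ 1
  have hPnot : ∀ n : ℕ, (Pm l s) ^ (n+1) ≠ 1 ∧ (Pm l s) ^ (n+1) ≠ -1 := by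
    intro n
    obtain ⟨u, v, hu, huv, hv, hP⟩ := hPn n
    have hoff : ∀ E : M2, (Pm l s) ^ (n+1) = E → E 0 1 = 0 → False := by
      intro E hE h01
      rw [hP] at hE
      have := congrFun (congrFun hE 0) 1
      rw [h01] at this
      simp [Pm, Matrix.sub_apply, Matrix.smul_apply, Matrix.one_apply] at this
      rcases this with h | h
      · linarith
      · linarith
    constructor
    · intro h; exact hoff 1 h (by simp [Matrix.one_apply])
    · intro h; exact hoff (-1) h (by simp [Matrix.one_apply])
  -- uW^n not in Z for n ≥ 1
  have hWval : (uW : M2) = -(Pm l s) := by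
    show (uX : M2) * uY * uX * (uY⁻¹ : M2ˣ) = -(Pm l s)
    rw [show ((uY⁻¹ : M2ˣ) : M2) = Yi l s from rfl]
    exact hW hs
  have hWnot : ∀ n : ℕ, (uW ^ (n+1) ∉ Z) := by
    intro n hmem
    obtain ⟨k, hk⟩ := Subgroup.mem_zpowers_iff.mp hmem
    have hval : ((uW ^ (n+1) : M2ˣ) : M2) = ((-1 : M2ˣ) ^ k : M2ˣ) := by rw [hk]
    have hP : (Pm l s) ^ (n+1) = (-1 : M2) ^ (n+1) * ((-1 : M2ˣ) ^ k : M2ˣ) := by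
      have : (Pm l s) = -(uW : M2) := by rw [hWval, neg_neg]
      rw [this, neg_pow, ← hval, Units.val_pow_eq_pow_val]
    have hk1 : ((-1 : M2ˣ) ^ k : M2ˣ) = 1 ∨ ((-1 : M2ˣ) ^ k : M2ˣ) = -1 := by
      rcases Int.even_or_odd k with he | ho
      · exact Or.inl he.neg_one_zpow
      · obtain ⟨m, rfl⟩ := ho
        refine Or.inr ?_
        rw [zpow_add, zpow_one, (even_two_mul m).neg_one_zpow, one_mul]
    have hn1 : (-1 : M2) ^ (n+1) = 1 ∨ (-1 : M2) ^ (n+1) = -1 := by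
      rcases Nat.even_or_odd (n+1) with he | ho
      · exact Or.inl he.neg_one_pow
      · exact Or.inr ho.neg_one_pow
    obtain ⟨h1, h2⟩ := hPnot n
    rcases hk1 with hk1 | hk1 <;> rcases hn1 with hn1 | hn1 <;>
      rw [hk1] at hP <;> rw [hn1] at hP <;>
      simp only [Units.val_one, Units.val_neg, mul_one, one_mul, mul_neg, neg_neg,
        neg_one_mul] at hP
    · exact h1 hP
    · exact h2 hP
    · exact h2 hP
    · exact h1 hP
  -- g has infinite order
  have hgpow : ∀ n : ℕ, n ≠ 0 → g ^ n ≠ 1 := by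
    intro n hn hgn
    obtain ⟨m, rfl⟩ := Nat.exists_eq_succ_of_ne_zero hn
    have : θ (g ^ (m+1)) = 1 := by rw [hgn, map_one]
    rw [map_pow, hθg, ← map_pow] at this
    exact hWnot m ((QuotientGroup.eq_one_iff _).mp this)
  have hinj : Function.Injective (fun n : ℕ => g ^ n) := by
    intro a b hab
    simp only at hab
    by_contra hne
    rcases Nat.lt_or_ge a b with h | h
    · obtain ⟨d, rfl⟩ : ∃ d, b = a + (d+1) := ⟨b - a - 1, by omega⟩
      rw [pow_add] at hab
      exact hgpow (d+1) (Nat.succ_ne_zero d) (left_eq_mul.mp hab)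
    · rcases Nat.lt_or_ge b a with h' | h'
      · obtain ⟨d, rfl⟩ : ∃ d, a = b + (d+1) := ⟨a - b - 1, by omega⟩
        rw [pow_add] at hab
        exact hgpow (d+1) (Nat.succ_ne_zero d) (left_eq_mul.mp hab.symm)
      · exact hne (le_antisymm h' h)
  exact Infinite.of_injective _ hinj

lemma exists_lam : ∃ l : ℝ, 1.8 ≤ l ∧ l ≤ 1.81 ∧ l^3 = l^2 + 2*l - 1 := by
  have hc : ContinuousOn (fun t : ℝ => t^3 - t^2 - 2*t + 1) (Set.Icc 1.8 1.81) := by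
    fun_prop
  have hiv := intermediate_value_Icc (by norm_num : (1.8:ℝ) ≤ 1.81) hc
  have h0 : (0:ℝ) ∈ Set.Icc ((fun t : ℝ => t^3 - t^2 - 2*t + 1) 1.8)
      ((fun t : ℝ => t^3 - t^2 - 2*t + 1) 1.81) := by
    constructor <;> norm_num
  obtain ⟨l, hl, hl0⟩ := hiv h0
  have hl0' : l^3 - l^2 - 2*l + 1 = 0 := hl0
  exact ⟨l, hl.1, hl.2, by linarith [hl0']⟩

/-- The group surjects onto the `(2,3,7)` triangle group; in particular it is
infinite. -/
theorem quintic_A6_3A2_group :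
    (∃ f : G →* Triangle237, Function.Surjective f) ∧ Infinite G := by
  obtain ⟨l, hl1, hl2, hcub⟩ := exists_lam
  have hsnn : (0:ℝ) ≤ l^2 - 3 := by nlinarith
  haveI : Infinite Triangle237 :=
    triangle_infinite l (Real.sqrt (l^2 - 3)) hl1 hl2 hcub (Real.sq_sqrt hsnn)
      (Real.sqrt_nonneg _)
  exact ⟨⟨phi, phi_surj⟩, Infinite.of_surjective phi phi_surj⟩

end QuinticA6
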